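/- Let Q be a symmetric n×n integer matrix with det Q ≠ 0 such that every diagonal entry of Q is even. Regard Q as a real symmetric matrix and let σ(Q) denote its signature, i.e. the number of positive eigenvalues minus the number of negative eigenvalues (counted with multiplicity). Then σ(Q) ≡ dim_{ℤ/2ℤ}((ℤⁿ/Q·ℤⁿ) ⊗_ℤ ℤ/2ℤ) (mod 2). -/

import Mathlib

open TensorProduct


open Module LinearMap Submodule Matrix TensorProduct

variable {K : Type*} [Field K]

lemma even_finrank_range_of_isAlt_aux (N : ℕ) :
    ∀ (V : Type) [AddCommGroup V] [Module K V] [FiniteDimensional K V],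
      finrank K V ≤ N → ∀ B : LinearMap.BilinForm K V, B.IsAlt →
      Even (finrank K (LinearMap.range B)) := by
  induction N with
  | zero =>
    intro V _ _ _ hV B _
    have h := LinearMap.finrank_range_add_finrank_ker B
    have : finrank K ↥(LinearMap.range B) = 0 := by omega
    rw [this]; exact Even.zero
  | succ N ih =>
    intro V _ _ _ hV B halt
    by_cases hB0 : B = 0
    · subst hB0
      rw [LinearMap.range_zero, finrank_bot]
      exact Even.zero
    · -- find x y with B x y ≠ 0
      have hrefl : B.IsRefl := halt.isRefl
      obtain ⟨x, hx⟩ : ∃ x, B x ≠ 0 := by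
        by_contra h
        push_neg at h
        exact hB0 (LinearMap.ext h)
      obtain ⟨y, hxy⟩ : ∃ y, B x y ≠ 0 := by
        by_contra h
        push_neg at h
        exact hx (LinearMap.ext h)
      set W : Submodule K V := Submodule.span K {x, y} with hWdef
      have hxW : x ∈ W := Submodule.subset_span (by simp)
      have hyW : y ∈ W := Submodule.subset_span (by simp)
      have hyx : B y x = - B x y := by
        have := LinearMap.IsAlt.neg halt x y
        exact this.symm
      -- finrank W = 2
      have hli : LinearIndependent K ![x, y] := by
        rw [linearIndependent_fin2]
        constructor
        · rintro rfl; simp at hxy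
        · intro a ha
          apply hxy
          have ha' : a • y = x := ha
          rw [← ha']
          simp [_root_.map_smul, halt y]
      have hW2 : finrank K W = 2 := by
        have : Set.range ![x, y] = {x, y} := by
          ext z
          simp only [Set.mem_range, Fin.exists_fin_two]
          constructor
          · rintro ⟨h | h⟩ <;> simp_all
          · rintro (rfl | rfl)
            · exact Or.inl rfl
            · exact Or.inr rfl
        rw [hWdef, ← this, finrank_span_eq_card hli]
        simp
      -- nondegenerate restriction
      have hnd : (B.restrict W).Nondegenerate := by
        refine (LinearMap.IsRefl.nondegenerate_iff_separatingLeft (B := B.restrict W) (fun u v h => hrefl _ _ h)).mpr ?_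
        rintro ⟨w, hw⟩ hww
        obtain ⟨a, b, rfl⟩ := Submodule.mem_span_pair.mp hw
        have h1 : B (a • x + b • y) y = 0 := hww ⟨y, hyW⟩
        have h2 : B (a • x + b • y) x = 0 := hww ⟨x, hxW⟩
        simp only [map_add, _root_.map_smul, LinearMap.add_apply, LinearMap.smul_apply,
          smul_eq_mul, halt x, halt y, hyx, mul_zero, add_zero, zero_add, mul_neg] at h1 h2
        have ha : a = 0 := by
          rcases mul_eq_zero.mp h1 with h | h
          · exact h
          · exact absurd h hxy
        have hb : b = 0 := by
          rw [neg_eq_zero] at h2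
          rcases mul_eq_zero.mp h2 with h | h
          · exact h
          · exact absurd h hxy
        ext
        simp [ha, hb]
      have hcompl : IsCompl W (B.orthogonal W) :=
        LinearMap.BilinForm.isCompl_orthogonal_of_restrict_nondegenerate hrefl hnd
      set Wp := B.orthogonal W with hWp
      have hdim : finrank K W + finrank K Wp = finrank K V := by
        rw [← Submodule.finrank_sup_add_finrank_inf_eq, hcompl.sup_eq_top, hcompl.inf_eq_bot]
        simp
      -- kernel identification
      have hker : (LinearMap.ker (B.restrict Wp)).map Wp.subtype = LinearMap.ker B := by
        apply le_antisymm
        · rintro _ ⟨⟨v, hv⟩, hvk, rfl⟩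
          simp only [LinearMap.mem_ker] at hvk ⊢
          ext u
          have hu : u ∈ W ⊔ Wp := by rw [hcompl.sup_eq_top]; trivial
          obtain ⟨w, hw, w', hw', rfl⟩ := Submodule.mem_sup.mp hu
          have e1 : B v w = 0 := hrefl w v (hv w hw)
          have e2 : B v w' = 0 := by
            have h3 : B.restrict Wp ⟨v, hv⟩ ⟨w', hw'⟩ = 0 := by rw [hvk]; rfl
            exact h3
          simp [map_add, e1, e2]
        · intro v hv
          simp only [LinearMap.mem_ker] at hv
          have hvWp : v ∈ Wp := fun w _ => hrefl v w (by rw [hv]; rfl)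
          refine ⟨⟨v, hvWp⟩, LinearMap.mem_ker.mpr ?_, rfl⟩
          ext u
          show B v u = 0
          rw [hv]
          rfl
      have hkerrank : finrank K (LinearMap.ker B) = finrank K (LinearMap.ker (B.restrict Wp)) := by
        rw [← hker, Submodule.finrank_map_subtype_eq]
      have h1 := LinearMap.finrank_range_add_finrank_ker B
      have h2 := LinearMap.finrank_range_add_finrank_ker (B.restrict Wp)
      have hIH : Even (finrank K (LinearMap.range (B.restrict Wp))) := by
        apply ih Wp (by omega) _ (fun u => halt u)
      have : finrank K (LinearMap.range B) =
          2 + finrank K (LinearMap.range (B.restrict Wp)) := by omega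
      rw [this]
      exact (even_two).add hIH

lemma even_finrank_range_of_isAlt {V : Type} [AddCommGroup V] [Module K V]
    [FiniteDimensional K V] (B : LinearMap.BilinForm K V) (hB : B.IsAlt) :
    Even (finrank K (LinearMap.range B)) :=
  even_finrank_range_of_isAlt_aux (finrank K V) V le_rfl B hB

lemma even_rank_of_symm_diag_zero {n : ℕ} (M : Matrix (Fin n) (Fin n) (ZMod 2))
    (hsymm : Mᵀ = M) (hdiag : ∀ i, M i i = 0) : Even M.rank := by
  set B : LinearMap.BilinForm (ZMod 2) (Fin n → ZMod 2) :=
    LinearMap.mk₂ (ZMod 2) (fun x y => dotProduct x (M.mulVec y))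
      (fun x x' y => by simp [add_dotProduct])
      (fun c x y => by simp [smul_dotProduct])
      (fun x y y' => by simp [Matrix.mulVec_add, dotProduct_add])
      (fun c x y => by simp [Matrix.mulVec_smul, dotProduct_smul]) with hB
  have halt : B.IsAlt := by
    intro x
    show dotProduct x (M.mulVec x) = 0
    have hsum : dotProduct x (M.mulVec x)
        = ∑ p ∈ Finset.univ ×ˢ Finset.univ, x p.1 * (M p.1 p.2 * x p.2) := by
      rw [Finset.sum_product]
      simp [dotProduct, Matrix.mulVec, Finset.mul_sum]
    rw [hsum]
    apply Finset.sum_ninvolution Prod.swap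
    · intro p
      have hMs : M p.2 p.1 = M p.1 p.2 := congrFun (congrFun hsymm p.1) p.2
      show x p.1 * (M p.1 p.2 * x p.2) + x p.2 * (M p.2 p.1 * x p.1) = 0
      rw [hMs, show x p.2 * (M p.1 p.2 * x p.1) = x p.1 * (M p.1 p.2 * x p.2) from by ring]
      exact CharTwo.add_self_eq_zero _
    · intro p hfp h
      apply hfp
      have h1 : p.2 = p.1 := (Prod.ext_iff.mp h).1
      show x p.1 * (M p.1 p.2 * x p.2) = 0
      rw [h1, hdiag p.1]
      ring
    · intro p
      simp
    · intro p
      exact Prod.swap_swap p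
  have key : ∀ v y, B v y = dotProduct (M.mulVec v) y := by
    intro v y
    show dotProduct v (M.mulVec y) = _
    rw [dotProduct_mulVec, ← Matrix.mulVec_transpose, hsymm]
  have hker : LinearMap.ker B = LinearMap.ker M.mulVecLin := by
    ext v
    simp only [LinearMap.mem_ker]
    constructor
    · intro hv
      ext j
      have h := congrFun (congrArg DFunLike.coe hv) (Pi.single j 1)
      rw [key] at h
      simpa [dotProduct_single] using h
    · intro hv
      refine LinearMap.ext fun y => ?_
      rw [key]
      have : M.mulVec v = 0 := hv
      rw [this]
      simp
  have h1 := LinearMap.finrank_range_add_finrank_ker B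
  have h2 := LinearMap.finrank_range_add_finrank_ker M.mulVecLin
  rw [hker] at h1
  have hrk : M.rank = finrank (ZMod 2) (LinearMap.range B) := by
    rw [Matrix.rank]
    omega
  rw [hrk]
  exact even_finrank_range_of_isAlt B halt


lemma finrank_tensor_coker (n : ℕ) (Q : Matrix (Fin n) (Fin n) ℤ) :
    finrank (ZMod 2) ((ZMod 2) ⊗[ℤ] ((Fin n → ℤ) ⧸ LinearMap.range Q.mulVecLin))
      = finrank (ZMod 2) ((Fin n → ZMod 2) ⧸
          LinearMap.range (Q.map (Int.cast : ℤ → ZMod 2)).mulVecLin) := by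
  classical
  set Q₂ : Matrix (Fin n) (Fin n) (ZMod 2) := Q.map (Int.cast : ℤ → ZMod 2) with hQ₂
  set R₁ : Submodule ℤ (Fin n → ℤ) := LinearMap.range Q.mulVecLin with hR₁
  set R₂ : Submodule (ZMod 2) (Fin n → ZMod 2) := LinearMap.range Q₂.mulVecLin with hR₂
  -- the reduction map
  let r : (Fin n → ℤ) →ₗ[ℤ] (Fin n → ZMod 2) :=
  { toFun := fun v i => ((v i : ℤ) : ZMod 2)
    map_add' := fun v w => by funext i; simp
    map_smul' := fun c v => by
      funext i
      simp [zsmul_eq_mul] }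
  have hr_apply : ∀ (v : Fin n → ℤ) i, r v i = ((v i : ℤ) : ZMod 2) := fun v i => rfl
  have hrsurj : Function.Surjective r := by
    intro w
    have h : ∀ i, ∃ c : ℤ, (c : ZMod 2) = w i := fun i => ZMod.intCast_surjective (w i)
    choose c hc using h
    exact ⟨c, funext fun i => hc i⟩
  have hcomm : ∀ v, r (Q.mulVec v) = Q₂.mulVec (r v) := by
    intro v
    funext i
    show ((Q.mulVec v i : ℤ) : ZMod 2) = _
    simp only [Matrix.mulVec, dotProduct, hQ₂, Matrix.map_apply, hr_apply]
    push_cast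
    rfl
  have halgsurj : Function.Surjective (algebraMap ℤ (ZMod 2)) := ZMod.intCast_surjective
  -- mk2 : reduction followed by quotient, as ℤ-linear map
  let mk2 : (Fin n → ZMod 2) →ₗ[ℤ] ((Fin n → ZMod 2) ⧸ R₂) := (R₂.mkQ).restrictScalars ℤ
  let g : ((Fin n → ℤ) ⧸ R₁) →ₗ[ℤ] ((Fin n → ZMod 2) ⧸ R₂) :=
    Submodule.liftQ R₁ (mk2 ∘ₗ r) (by
      rintro _ ⟨v, rfl⟩
      simp only [LinearMap.mem_ker, LinearMap.comp_apply]
      show R₂.mkQ (r (Q.mulVec v)) = 0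
      rw [hcomm]
      rw [Submodule.mkQ_apply, Submodule.Quotient.mk_eq_zero]
      exact ⟨r v, rfl⟩)
  have hg_apply : ∀ v : Fin n → ℤ, g (Submodule.Quotient.mk v) = R₂.mkQ (r v) := fun v => rfl
  -- φ : the forward map
  let Bmap : (ZMod 2) →ₗ[ℤ] (((Fin n → ℤ) ⧸ R₁) →ₗ[ℤ] ((Fin n → ZMod 2) ⧸ R₂)) :=
  { toFun := fun c => c • g
    map_add' := fun c c' => add_smul c c' g
    map_smul' := fun z c => by
      simp only [RingHom.id_apply]
      rw [zsmul_eq_mul, mul_smul, Int.cast_smul_eq_zsmul] }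
  let φ : (ZMod 2) ⊗[ℤ] ((Fin n → ℤ) ⧸ R₁) →ₗ[ℤ] ((Fin n → ZMod 2) ⧸ R₂) :=
    TensorProduct.lift Bmap
  have hφ_apply : ∀ (c : ZMod 2) (y : (Fin n → ℤ) ⧸ R₁),
      φ (c ⊗ₜ[ℤ] y) = c • g y := fun c y => rfl
  -- ψ : the inverse map
  let mki : ∀ _ : Fin n, (ZMod 2) →ₗ[ZMod 2] (ZMod 2) ⊗[ℤ] ((Fin n → ℤ) ⧸ R₁) :=
    fun i =>
    { toFun := fun c => c ⊗ₜ[ℤ] (Submodule.Quotient.mk (Pi.single i 1))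
      map_add' := fun c c' => TensorProduct.add_tmul c c' _
      map_smul' := fun c' c => by
        simp only [RingHom.id_apply]
        rw [TensorProduct.smul_tmul', smul_eq_mul] }
  let ψ₀ : (Fin n → ZMod 2) →ₗ[ZMod 2] (ZMod 2) ⊗[ℤ] ((Fin n → ℤ) ⧸ R₁) :=
    ∑ i, (mki i) ∘ₗ (LinearMap.proj i)
  have hψ₀_apply : ∀ w, ψ₀ w = ∑ i, (w i) ⊗ₜ[ℤ] (Submodule.Quotient.mk (Pi.single i 1) :
      (Fin n → ℤ) ⧸ R₁) := by
    intro w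
    simp only [ψ₀, LinearMap.sum_apply, LinearMap.comp_apply, LinearMap.proj_apply]
    rfl
  have hψ₀r : ∀ v : Fin n → ℤ, ψ₀ (r v)
      = (1 : ZMod 2) ⊗ₜ[ℤ] (Submodule.Quotient.mk v : (Fin n → ℤ) ⧸ R₁) := by
    intro v
    rw [hψ₀_apply]
    have step : ∀ i : Fin n, (r v i) ⊗ₜ[ℤ] (Submodule.Quotient.mk (Pi.single i 1) :
        (Fin n → ℤ) ⧸ R₁)
        = (1 : ZMod 2) ⊗ₜ[ℤ] (Submodule.Quotient.mk (Pi.single i (v i)) :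
          (Fin n → ℤ) ⧸ R₁) := by
      intro i
      have h1 : (r v i) = (v i) • (1 : ZMod 2) := by
        rw [hr_apply, zsmul_eq_mul, mul_one]
      rw [h1, TensorProduct.smul_tmul]
      congr 1
      rw [← Submodule.Quotient.mk_smul]
      congr 1
      funext j
      by_cases h : j = i
      · subst h; simp
      · simp [Pi.single_eq_of_ne h]
    rw [Finset.sum_congr rfl (fun i _ => step i), ← TensorProduct.tmul_sum]
    congr 1
    have : ∑ i : Fin n, (Submodule.Quotient.mk (Pi.single i (v i)) : (Fin n → ℤ) ⧸ R₁)
        = Submodule.Quotient.mk (∑ i : Fin n, Pi.single i (v i)) := by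
      exact (map_sum R₁.mkQ _ _).symm
    rw [this, Finset.univ_sum_single]
  have hkerψ : R₂ ≤ LinearMap.ker ψ₀ := by
    rintro _ ⟨w, rfl⟩
    obtain ⟨v, rfl⟩ := hrsurj w
    simp only [LinearMap.mem_ker]
    show ψ₀ (Q₂.mulVec (r v)) = 0
    rw [← hcomm, hψ₀r]
    have : (Submodule.Quotient.mk (Q.mulVec v) : (Fin n → ℤ) ⧸ R₁) = 0 :=
      (Submodule.Quotient.mk_eq_zero _).mpr ⟨v, rfl⟩
    rw [this, TensorProduct.tmul_zero]
  let ψ : ((Fin n → ZMod 2) ⧸ R₂) →ₗ[ZMod 2] (ZMod 2) ⊗[ℤ] ((Fin n → ℤ) ⧸ R₁) :=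
    Submodule.liftQ R₂ ψ₀ hkerψ
  -- upgrade φ to ZMod 2 linear
  let φ' : (ZMod 2) ⊗[ℤ] ((Fin n → ℤ) ⧸ R₁) →ₗ[ZMod 2] ((Fin n → ZMod 2) ⧸ R₂) :=
    LinearMap.extendScalarsOfSurjective halgsurj φ
  have h1 : ∀ z, φ' (ψ z) = z := by
    intro z
    obtain ⟨w, rfl⟩ := R₂.mkQ_surjective z
    obtain ⟨v, rfl⟩ := hrsurj w
    show φ (ψ₀ (r v)) = R₂.mkQ (r v)
    rw [hψ₀r, hφ_apply, one_smul, hg_apply]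
  have h2 : ∀ t, ψ (φ' t) = t := by
    have key : ((ψ.restrictScalars ℤ) ∘ₗ φ) = LinearMap.id := by
      apply TensorProduct.ext'
      intro c y
      obtain ⟨cz, rfl⟩ := ZMod.intCast_surjective c
      obtain ⟨v, rfl⟩ := R₁.mkQ_surjective y
      have hc : ((cz : ZMod 2)) = cz • (1 : ZMod 2) := by rw [zsmul_eq_mul, mul_one]
      have base : ((ψ.restrictScalars ℤ) ∘ₗ φ) ((1 : ZMod 2) ⊗ₜ[ℤ] R₁.mkQ v)
          = (LinearMap.id : (ZMod 2 ⊗[ℤ] ((Fin n → ℤ) ⧸ R₁)) →ₗ[ℤ]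
              (ZMod 2 ⊗[ℤ] ((Fin n → ℤ) ⧸ R₁))) ((1 : ZMod 2) ⊗ₜ[ℤ] R₁.mkQ v) := by
        simp only [LinearMap.comp_apply, LinearMap.restrictScalars_apply, LinearMap.id_apply]
        show ψ (φ ((1 : ZMod 2) ⊗ₜ[ℤ] (Submodule.Quotient.mk v))) = _
        rw [hφ_apply, one_smul, hg_apply]
        show ψ₀ (r v) = _
        rw [hψ₀r]
        rfl
      have hsm : ((cz • (1 : ZMod 2)) ⊗ₜ[ℤ] (R₁.mkQ v) : ZMod 2 ⊗[ℤ] ((Fin n → ℤ) ⧸ R₁))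
          = cz • ((1 : ZMod 2) ⊗ₜ[ℤ] (R₁.mkQ v)) :=
        (TensorProduct.smul_tmul' cz (1 : ZMod 2) (R₁.mkQ v)).symm
      rw [hc, hsm]
      exact ((LinearMap.map_smul _ cz _).trans (congrArg (cz • ·) base)).trans
        (LinearMap.map_smul _ cz _).symm
    intro t
    exact congrArg (fun f => f t) key
  have e : ((ZMod 2) ⊗[ℤ] ((Fin n → ℤ) ⧸ R₁)) ≃ₗ[ZMod 2] ((Fin n → ZMod 2) ⧸ R₂) :=
    LinearEquiv.ofLinear φ' ψ (LinearMap.ext h1) (LinearMap.ext h2)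
  exact e.finrank_eq


/-- Let `Q` be a symmetric `n × n` integer matrix with nonzero determinant and even
diagonal entries. Then the signature of `Q` (as a real symmetric matrix: the number of
positive eigenvalues minus the number of negative eigenvalues, with multiplicity) is
congruent mod 2 to the `ℤ/2ℤ`-dimension of `(ℤⁿ/Q·ℤⁿ) ⊗ ℤ/2ℤ`. -/
theorem signature_parity_eq_coker_dim_parity (n : ℕ) (Q : Matrix (Fin n) (Fin n) ℤ)
    (hsymm : Q.IsSymm) (hdet : Q.det ≠ 0) (hdiag : ∀ i, Even (Q i i))
    (hherm : (Q.map (Int.cast : ℤ → ℝ)).IsHermitian) :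
    ((Finset.univ.filter fun i => 0 < hherm.eigenvalues i).card : ℤ)
        - ((Finset.univ.filter fun i => hherm.eigenvalues i < 0).card : ℤ)
      ≡ (Module.finrank (ZMod 2)
          ((ZMod 2) ⊗[ℤ] ((Fin n → ℤ) ⧸ LinearMap.range Q.mulVecLin)) : ℤ) [ZMOD 2] := by
  classical
  -- Step 1: no zero eigenvalues, so #pos + #neg = n
  have hdetR : (Q.map (Int.cast : ℤ → ℝ)).det ≠ 0 := by
    have h := RingHom.map_det (Int.castRingHom ℝ) Q
    rw [RingHom.mapMatrix_apply] at h
    rw [show (Int.cast : ℤ → ℝ) = ⇑(Int.castRingHom ℝ) from rfl, ← h]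
    simpa using hdet
  have hev : ∀ i, hherm.eigenvalues i ≠ 0 := by
    have hprod := hherm.det_eq_prod_eigenvalues
    intro i hi
    apply hdetR
    rw [hprod]
    exact Finset.prod_eq_zero (Finset.mem_univ i) (by exact_mod_cast hi)
  have hcard : (Finset.univ.filter fun i => 0 < hherm.eigenvalues i).card
      + (Finset.univ.filter fun i => hherm.eigenvalues i < 0).card = n := by
    have hneg : (Finset.univ.filter fun i => hherm.eigenvalues i < 0)
        = (Finset.univ.filter fun i => ¬ 0 < hherm.eigenvalues i) := by
      apply Finset.filter_congr
      intro i _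
      constructor
      · intro h; exact not_lt.mpr h.le
      · intro h
        rcases lt_trichotomy (hherm.eigenvalues i) 0 with h' | h' | h'
        · exact h'
        · exact absurd h' (hev i)
        · exact absurd h' h
    rw [hneg]
    rw [Finset.card_filter_add_card_filter_not]
    simp
  -- Step 2: mod 2 reduction of the matrix
  set Q₂ : Matrix (Fin n) (Fin n) (ZMod 2) := Q.map (Int.cast : ℤ → ZMod 2) with hQ₂def
  have hQ₂symm : Q₂ᵀ = Q₂ := by
    rw [hQ₂def, ← Matrix.transpose_map, hsymm.eq]
  have hQ₂diag : ∀ i, Q₂ i i = 0 := by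
    intro i
    obtain ⟨k, hk⟩ := hdiag i
    show ((Q i i : ℤ) : ZMod 2) = 0
    rw [hk]
    push_cast
    exact CharTwo.add_self_eq_zero _
  have heven := even_rank_of_symm_diag_zero Q₂ hQ₂symm hQ₂diag
  -- Step 3: the dimension of the tensor product
  have hfr := finrank_tensor_coker n Q
  have hq : finrank (ZMod 2) ((Fin n → ZMod 2) ⧸ LinearMap.range Q₂.mulVecLin)
      + Q₂.rank = n := by
    have := Submodule.finrank_quotient_add_finrank (LinearMap.range Q₂.mulVecLin)
    rw [Matrix.rank]
    simpa using this
  -- Step 4: put it all together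
  obtain ⟨k, hk⟩ := heven
  show _ % 2 = _ % 2
  have hfr' : (Module.finrank (ZMod 2)
      ((ZMod 2) ⊗[ℤ] ((Fin n → ℤ) ⧸ LinearMap.range Q.mulVecLin)) : ℤ)
      = (finrank (ZMod 2) ((Fin n → ZMod 2) ⧸ LinearMap.range Q₂.mulVecLin) : ℤ) := by
    rw [← hQ₂def] at hfr
    exact_mod_cast hfr
  rw [hfr']
  omega
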